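/- arXiv:2312.00444 — 6 statements merged into one kernel-verified Lean document; each statement's English description precedes it below -/
import Mathlib

section
/- Let V be a ℤ₂-graded complex vector space and B a consistent, super positive sesquilinear form on V. If A : V → V is an odd linear operator which is B-super-skew-adjoint and satisfies A ∘ A = 0, then A = 0. (This is the core of the paper's Proposition 3.1: in any unitary representation of an Abelian Lie superalgebra, every odd element ξ satisfies [ξ,ξ] = 0, hence acts by such an operator A, and therefore acts by zero.) -/
/-!
For homogeneous `v`, super-skew-adjointness and `A ∘ A = 0` give
`B (A v) (A v) = ∓ B v (A (A v)) = 0`. But `A v` is homogeneous (of the opposite parity), and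
super positivity makes `B` anisotropic on each homogeneous part, so `A v = 0`. Hence `A`
vanishes on `V₀` and on `V₁`, which together span `V`.
-/

section SesquilinearForm

variable {V : Type*} [AddCommGroup V] [Module ℂ V] (B : V → V → ℂ)

theorem apply_zero_right_of_conj_linear
    (hB2 : ∀ (a : ℂ) (u v v' : V), B u (a • v + v') = (starRingEnd ℂ) a * B u v + B u v')
    (u : V) : B u 0 = 0 := by
  have h := hB2 1 u 0 0
  simp only [smul_zero, add_zero, map_one, one_mul, left_eq_add] at h
  exact h

theorem eq_zero_of_apply_self_eq_zero {W : Submodule ℂ V} {c : ℂ} (hc : c ≠ 0)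
    (hpos : ∀ v ∈ W, v ≠ 0 → ∃ t : ℝ, 0 < t ∧ B v v = c * (t : ℂ))
    {v : V} (hv : v ∈ W) (hvv : B v v = 0) : v = 0 := by
  by_contra hne
  obtain ⟨t, ht, hBt⟩ := hpos v hv hne
  rw [hvv, eq_comm, mul_eq_zero, Complex.ofReal_eq_zero] at hBt
  exact hBt.elim hc ht.ne'

end SesquilinearForm

theorem stmt_0_general
    (V : Type*) [AddCommGroup V] [Module ℂ V]
    (V0 V1 : Submodule ℂ V) (hcompl : IsCompl V0 V1)
    (B : V → V → ℂ)
    -- `B` is conjugate-linear in the second argument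
    (hB2 : ∀ (a : ℂ) (u v v' : V), B u (a • v + v') = (starRingEnd ℂ) a * B u v + B u v')
    -- `B` is super positive
    (hpos0 : ∀ v ∈ V0, v ≠ 0 → ∃ t : ℝ, 0 < t ∧ B v v = (t : ℂ))
    (hpos1 : ∀ v ∈ V1, v ≠ 0 → ∃ t : ℝ, 0 < t ∧ B v v = Complex.I * (t : ℂ))
    -- `A` is an odd linear operator
    (A : V →ₗ[ℂ] V)
    (hodd0 : ∀ v ∈ V0, A v ∈ V1) (hodd1 : ∀ v ∈ V1, A v ∈ V0)
    -- `A` is `B`-super-skew-adjoint: `B (A v) w + (-1)^|v| * B v (A w) = 0`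
    (hskew0 : ∀ v ∈ V0, ∀ w : V, B (A v) w + B v (A w) = 0)
    (hskew1 : ∀ v ∈ V1, ∀ w : V, B (A v) w - B v (A w) = 0)
    -- `A ∘ A = 0`
    (hAA : ∀ v : V, A (A v) = 0) :
    A = 0 := by
  have hB0 := apply_zero_right_of_conj_linear B hB2
  have hpos0' : ∀ v ∈ V0, v ≠ 0 → ∃ t : ℝ, 0 < t ∧ B v v = 1 * (t : ℂ) := by
    simpa only [one_mul] using hpos0
  refine LinearMap.ext_on_codisjoint hcompl.codisjoint (fun v hv => ?_) (fun v hv => ?_)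
  · refine eq_zero_of_apply_self_eq_zero B Complex.I_ne_zero hpos1 (hodd0 v hv) ?_
    simpa only [hAA, hB0, add_zero] using hskew0 v hv (A v)
  · refine eq_zero_of_apply_self_eq_zero B one_ne_zero hpos0' (hodd1 v hv) ?_
    simpa only [hAA, hB0, sub_zero] using hskew1 v hv (A v)

/-- core of the paper's Proposition 3.1.
Let `V` be a ℤ₂-graded complex vector space (even part `V0`, odd part `V1`,
internal direct sum) and `B` a consistent, super positive sesquilinear form on `V`.
If `A : V → V` is an odd linear operator which is `B`-super-skew-adjoint and
satisfies `A ∘ A = 0`, then `A = 0`. -/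
theorem stmt_0
    (V : Type*) [AddCommGroup V] [Module ℂ V]
    (V0 V1 : Submodule ℂ V) (hcompl : IsCompl V0 V1)
    (B : V → V → ℂ)
    -- `B` is ℂ-linear in the first argument
    (hB1 : ∀ (a : ℂ) (u u' v : V), B (a • u + u') v = a * B u v + B u' v)
    -- `B` is conjugate-linear in the second argument
    (hB2 : ∀ (a : ℂ) (u v v' : V), B u (a • v + v') = (starRingEnd ℂ) a * B u v + B u v')
    -- `B` is consistent
    (hcons : ∀ u ∈ V0, ∀ v ∈ V1, B u v = 0 ∧ B v u = 0)
    -- `B` is super positive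
    (hpos0 : ∀ v ∈ V0, v ≠ 0 → ∃ t : ℝ, 0 < t ∧ B v v = (t : ℂ))
    (hpos1 : ∀ v ∈ V1, v ≠ 0 → ∃ t : ℝ, 0 < t ∧ B v v = Complex.I * (t : ℂ))
    -- `A` is an odd linear operator
    (A : V →ₗ[ℂ] V)
    (hodd0 : ∀ v ∈ V0, A v ∈ V1) (hodd1 : ∀ v ∈ V1, A v ∈ V0)
    -- `A` is `B`-super-skew-adjoint: `B (A v) w + (-1)^|v| * B v (A w) = 0`
    (hskew0 : ∀ v ∈ V0, ∀ w : V, B (A v) w + B v (A w) = 0)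
    (hskew1 : ∀ v ∈ V1, ∀ w : V, B (A v) w - B v (A w) = 0)
    -- `A ∘ A = 0`
    (hAA : ∀ v : V, A (A v) = 0) :
    A = 0 :=
  stmt_0_general V V0 V1 hcompl B hB2 hpos0 hpos1 A hodd0 hodd1 hskew0 hskew1 hAA
end

section
/- Let V be a finite-dimensional ℤ₂-graded complex vector space with a consistent, super Hermitian symmetric, super positive sesquilinear form B, and let S be a set of linear operators on V, each homogeneous and B-super-skew-adjoint. Then V is completely reducible: there exists a finite family W₁, …, W_r of nonzero graded subspaces of V, each invariant under every A ∈ S and containing no graded S-invariant subspace other than 0 and itself, such that V is the internal direct sum of W₁, …, W_r. (Paper's Proposition 2.2: every finite-dimensional unitary representation of a complex Lie superalgebra or Lie supergroup is completely reducible.) -/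
/-!
Twisting `B` on the odd part, `⟪u, v⟫ = B(u₀, v₀) - i • B(u₁, v₁)` is a positive definite
Hermitian form: super positivity says exactly that `-i • B(v₁, v₁) > 0`. For this form the even
projection is self-adjoint, and every `A ∈ S` satisfies `⟪A u, v⟫ = c • ⟪u, A v⟫`, with `c = -1` if
`A` is even and `c = i` if `A` is odd. A subspace is graded iff it is invariant under the even
projection, so the graded `S`-invariant subspaces are the subspaces invariant under `S` together with
that projection, and orthogonal complements preserve them. Hence they form a complemented lattice.
Being also modular and of finite height, it is atomistic, and an independent family of atoms
whose join is `V` gives the decomposition.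
-/

open Complex Submodule

namespace CompleteSublattice

variable {α : Type*} [CompleteLattice α]

instance instIsModularLattice [IsModularLattice α] (L : CompleteSublattice α) :
    IsModularLattice L :=
  ⟨fun {_} y {_} hxz => by
    rw [← Subtype.coe_le_coe] at hxz ⊢
    exact IsModularLattice.sup_inf_le_assoc_of_le (y : α) hxz⟩

variable {L : CompleteSublattice α}

theorem iSupIndep_coe {ι : Type*} {f : ι → L} (hf : iSupIndep f) :
    iSupIndep (fun i => (f i : α)) := by
  simpa only [iSupIndep_def, CompleteSublattice.disjoint_iff, coe_iSup] using hf

theorem eq_bot_or_eq_of_isAtom {a : L} (ha : IsAtom a) {b : α} (hb : b ∈ L) (hba : b ≤ a) :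
    b = ⊥ ∨ b = a := by
  simpa [← Subtype.coe_inj] using ha.le_iff.mp (show (⟨b, hb⟩ : L) ≤ a from hba)

end CompleteSublattice

namespace Module.End

def jointInvtSubmodule {R M : Type*} [Semiring R] [AddCommMonoid M] [Module R M]
    (T : Set (Module.End R M)) : CompleteSublattice (Submodule R M) where
  carrier := {p | ∀ f ∈ T, p ∈ f.invtSubmodule}
  supClosed' _ hp _ hq f hf := invtSubmodule.sup_mem (hp f hf) (hq f hf)
  infClosed' _ hp _ hq f hf := invtSubmodule.inf_mem (hp f hf) (hq f hf)
  sSupClosed' s hs f hf :=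
    sSup_le fun p hp => (hs hp f hf).trans (Submodule.comap_mono (le_sSup hp))
  sInfClosed' s hs f hf x hx := by
    simp only [Submodule.mem_comap, Submodule.mem_sInf] at hx ⊢
    exact fun p hp => hs hp f hf (hx p hp)

theorem mem_jointInvtSubmodule {R M : Type*} [Semiring R] [AddCommMonoid M] [Module R M]
    {T : Set (Module.End R M)} {p : Submodule R M} :
    p ∈ jointInvtSubmodule T ↔ ∀ f ∈ T, p ∈ f.invtSubmodule :=
  Iff.rfl

theorem exists_isInternal_isAtom_jointInvtSubmodule {R M : Type*} [Ring R] [AddCommGroup M]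
    [Module R M] [IsNoetherian R M] (T : Set (Module.End R M))
    [ComplementedLattice (jointInvtSubmodule T)] :
    ∃ (r : ℕ) (W : Fin r → jointInvtSubmodule T),
      (∀ i, IsAtom (W i)) ∧ DirectSum.IsInternal (fun i => (W i : Submodule R M)) := by
  have := CompleteLattice.isCompactlyGenerated_of_wellFoundedGT (α := jointInvtSubmodule T)
  obtain ⟨s, hind, hsup, hatoms⟩ :=
    exists_sSupIndep_of_sSup_atoms_eq_top (sSup_atoms_eq_top (α := jointInvtSubmodule T))
  have : Finite s := WellFoundedGT.finite_of_sSupIndep hind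
  let e := (Finite.equivFin s).symm
  refine ⟨_, fun i => e i, fun i => hatoms (e i).2, ?_⟩
  refine DirectSum.isInternal_submodule_of_iSupIndep_of_iSup_eq_top
    (CompleteSublattice.iSupIndep_coe (((sSupIndep_iff s).mp hind).comp e.injective)) ?_
  rw [← CompleteSublattice.coe_iSup, e.iSup_comp (g := fun a : s => (a : jointInvtSubmodule T)),
    ← sSup_eq_iSup', hsup, CompleteSublattice.coe_top]

end Module.End

open Module.End

section InnerProductSpace

variable {𝕜 E : Type*} [RCLike 𝕜] [NormedAddCommGroup E] [InnerProductSpace 𝕜 E]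

theorem Submodule.orthogonal_mem_invtSubmodule_of_inner_map_right {f : Module.End 𝕜 E} {c : 𝕜}
    (hf : ∀ u v, inner 𝕜 u (f v) = c * inner 𝕜 (f u) v) {W : Submodule 𝕜 E}
    (hW : W ∈ f.invtSubmodule) : Wᗮ ∈ f.invtSubmodule :=
  fun v hv u hu => by rw [hf, hv _ (hW hu), mul_zero]

theorem complementedLattice_jointInvtSubmodule [FiniteDimensional 𝕜 E] {T : Set (Module.End 𝕜 E)}
    (hT : ∀ f ∈ T, ∃ c : 𝕜, ∀ u v, inner 𝕜 u (f v) = c * inner 𝕜 (f u) v) :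
    ComplementedLattice (jointInvtSubmodule T) :=
  CompleteSublattice.isComplemented_iff.mpr fun W hW =>
    ⟨Wᗮ, fun f hf => (hT f hf).elim fun _ hc =>
      W.orthogonal_mem_invtSubmodule_of_inner_map_right hc (hW f hf), W.isCompl_orthogonal⟩

end InnerProductSpace

theorem complementedLattice_jointInvtSubmodule_of_sesqForm {𝕜 E : Type*} [RCLike 𝕜]
    [AddCommGroup E] [Module 𝕜 E] [FiniteDimensional 𝕜 E] (h : E →ₗ[𝕜] E →ₗ⋆[𝕜] 𝕜)
    (h_conj : ∀ u v, starRingEnd 𝕜 (h u v) = h v u) (h_pos : ∀ v ≠ 0, 0 < RCLike.re (h v v))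
    {T : Set (Module.End 𝕜 E)} (hT : ∀ f ∈ T, ∃ c : 𝕜, ∀ u v, h (f u) v = c * h u (f v)) :
    ComplementedLattice (jointInvtSubmodule T) := by
  let core : InnerProductSpace.Core 𝕜 E :=
    { inner u v := h v u
      conj_inner_symm u v := h_conj u v
      re_inner_nonneg v := by
        obtain rfl | hv := eq_or_ne v 0
        · simp
        · exact (h_pos v hv).le
      add_left u v w := map_add (h w) u v
      smul_left u v r := (h v).map_smulₛₗ r u
      definite v hv := by
        by_contra hne
        simpa [hv] using h_pos v hne }
  let := core.toNormedAddCommGroup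
  let := InnerProductSpace.ofCore core.toCore
  exact complementedLattice_jointInvtSubmodule fun f hf => (hT f hf).imp fun _ hc u v => hc v u

namespace Submodule

variable {R M N : Type*} [Ring R] [AddCommGroup M] [Module R M] [AddCommGroup N] [Module R N]

theorem projection_apply_map_of_mapsTo {p q : Submodule R M} {p' q' : Submodule R N}
    (hpq : IsCompl p q) (hpq' : IsCompl p' q') {f : M →ₗ[R] N}
    (hp : ∀ x ∈ p, f x ∈ p') (hq : ∀ x ∈ q, f x ∈ q') (x : M) :
    p'.projection q' hpq' (f x) = f (p.projection q hpq x) := by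
  conv_lhs => rw [← projection_add_projection_eq_self hpq x, map_add, map_add,
    projection_apply_of_mem_left hpq' (hp _ (projection_apply_mem _ _)),
    projection_apply_of_mem_right hpq' (hq _ (projection_apply_mem _ _)), add_zero]

theorem mem_invtSubmodule_projection_iff {p q W : Submodule R M} (hpq : IsCompl p q) :
    W ∈ Module.End.invtSubmodule (p.projection q hpq) ↔ W = W ⊓ p ⊔ W ⊓ q := by
  refine ⟨fun hW => le_antisymm (fun v hv => ?_) (sup_le inf_le_left inf_le_left),
    fun hW v hv => ?_⟩
  · have hq : q.projection p hpq.symm v ∈ W := by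
      rw [projection_eq_self_sub_projection hpq]
      exact sub_mem hv (hW hv)
    rw [← projection_add_projection_eq_self hpq v]
    exact add_mem_sup ⟨hW hv, projection_apply_mem _ _⟩ ⟨hq, projection_apply_mem _ _⟩
  · rw [hW] at hv ⊢
    obtain ⟨a, ha, b, hb, rfl⟩ := mem_sup.mp hv
    rw [mem_comap, map_add, projection_apply_of_mem_left hpq ha.2,
      projection_apply_of_mem_right hpq hb.2, add_zero]
    exact mem_sup_left ha

end Submodule

theorem exists_sesqForm_eq {V : Type*} [AddCommGroup V] [Module ℂ V] (B : V → V → ℂ)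
    (hB1 : ∀ (a : ℂ) (u u' v : V), B (a • u + u') v = a * B u v + B u' v)
    (hB2 : ∀ (a : ℂ) (u v v' : V), B u (a • v + v') = (starRingEnd ℂ) a * B u v + B u v') :
    ∃ β : V →ₗ[ℂ] V →ₗ⋆[ℂ] ℂ, (fun u v => β u v) = B := by
  have zero_left : ∀ v, B 0 v = 0 := fun v => by simpa using hB1 1 0 0 v
  have zero_right : ∀ u, B u 0 = 0 := fun u => by simpa using hB2 1 u 0 0
  exact ⟨LinearMap.mk₂'ₛₗ (RingHom.id ℂ) (starRingEnd ℂ) B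
    (fun u u' v => by simpa using hB1 1 u u' v)
    (fun a u v => by simpa [zero_left] using hB1 a u 0 v)
    (fun u v v' => by simpa using hB2 1 u v v')
    (fun a u v => by simpa [zero_right] using hB2 a u v 0), rfl⟩

section SuperHermitian

variable {V : Type*} [AddCommGroup V] [Module ℂ V] {V0 V1 : Submodule ℂ V}
  (hcompl : IsCompl V0 V1) (B : V →ₗ[ℂ] V →ₗ⋆[ℂ] ℂ)

local notation "π₀" => V0.projection V1 hcompl
local notation "π₁" => V1.projection V0 hcompl.symm

noncomputable def hermitianOfSuper : V →ₗ[ℂ] V →ₗ⋆[ℂ] ℂ :=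
  (B.comp π₀).compl₂ π₀ - I • (B.comp π₁).compl₂ π₁

theorem hermitianOfSuper_apply (u v : V) :
    hermitianOfSuper hcompl B u v = B (π₀ u) (π₀ v) - I * B (π₁ u) (π₁ v) :=
  rfl

theorem conj_hermitianOfSuper (hsym00 : ∀ u ∈ V0, ∀ v ∈ V0, B u v = starRingEnd ℂ (B v u))
    (hsym11 : ∀ u ∈ V1, ∀ v ∈ V1, B u v = -starRingEnd ℂ (B v u)) (u v : V) :
    starRingEnd ℂ (hermitianOfSuper hcompl B u v) = hermitianOfSuper hcompl B v u := by
  rw [hermitianOfSuper_apply, hermitianOfSuper_apply, map_sub, map_mul, conj_I,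
    hsym00 _ (projection_apply_mem _ _) _ (projection_apply_mem _ _),
    hsym11 _ (projection_apply_mem _ _) _ (projection_apply_mem _ _), map_neg, conj_conj,
    conj_conj]
  ring

theorem re_hermitianOfSuper_self_pos
    (hpos0 : ∀ v ∈ V0, v ≠ 0 → ∃ t : ℝ, 0 < t ∧ B v v = t)
    (hpos1 : ∀ v ∈ V1, v ≠ 0 → ∃ t : ℝ, 0 < t ∧ B v v = I * t) {v : V} (hv : v ≠ 0) :
    0 < (hermitianOfSuper hcompl B v v).re := by
  have even : ∀ x ∈ V0, 0 ≤ (B x x).re ∧ (x ≠ 0 → 0 < (B x x).re) := fun x hx => by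
    obtain rfl | hx0 := eq_or_ne x 0
    · simp
    · obtain ⟨t, ht, hxx⟩ := hpos0 x hx hx0
      simp [hxx, ht, ht.le]
  have odd : ∀ x ∈ V1, 0 ≤ (-(I * B x x)).re ∧ (x ≠ 0 → 0 < (-(I * B x x)).re) := fun x hx => by
    obtain rfl | hx0 := eq_or_ne x 0
    · simp
    · obtain ⟨t, ht, hxx⟩ := hpos1 x hx hx0
      simp [hxx, ht, ht.le]
  obtain ⟨even_nonneg, even_pos⟩ := even _ (projection_apply_mem hcompl v)
  obtain ⟨odd_nonneg, odd_pos⟩ := odd _ (projection_apply_mem hcompl.symm v)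
  have : π₀ v ≠ 0 ∨ π₁ v ≠ 0 := by
    contrapose! hv
    rw [← projection_add_projection_eq_self hcompl v, hv.1, hv.2, add_zero]
  rw [hermitianOfSuper_apply, sub_eq_add_neg, add_re]
  rcases this with h | h
  · linarith [even_pos h]
  · linarith [odd_pos h]

theorem hermitianOfSuper_projection_left (u v : V) :
    hermitianOfSuper hcompl B (π₀ u) v = hermitianOfSuper hcompl B u (π₀ v) := by
  have idem : ∀ x, π₀ (π₀ x) = π₀ x := fun x =>
    projection_apply_of_mem_left hcompl (projection_apply_mem _ _)
  have orth : ∀ x, π₁ (π₀ x) = 0 := fun x =>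
    projection_apply_of_mem_right hcompl.symm (projection_apply_mem _ _)
  simp only [hermitianOfSuper_apply, idem, orth, map_zero, LinearMap.zero_apply]

theorem hermitianOfSuper_map_left_of_even {A : V →ₗ[ℂ] V}
    (hA0 : ∀ v ∈ V0, A v ∈ V0) (hA1 : ∀ v ∈ V1, A v ∈ V1)
    (hskew : ∀ v : V, (v ∈ V0 ∨ v ∈ V1) → ∀ w : V, B (A v) w + B v (A w) = 0) (u v : V) :
    hermitianOfSuper hcompl B (A u) v = -hermitianOfSuper hcompl B u (A v) := by
  have comm0 : ∀ x, π₀ (A x) = A (π₀ x) :=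
    projection_apply_map_of_mapsTo hcompl hcompl hA0 hA1
  have comm1 : ∀ x, π₁ (A x) = A (π₁ x) :=
    projection_apply_map_of_mapsTo hcompl.symm hcompl.symm hA1 hA0
  have hs0 := hskew (π₀ u) (Or.inl (projection_apply_mem _ _)) (π₀ v)
  have hs1 := hskew (π₁ u) (Or.inr (projection_apply_mem _ _)) (π₁ v)
  rw [hermitianOfSuper_apply, hermitianOfSuper_apply, comm0, comm0, comm1, comm1]
  linear_combination hs0 - I * hs1

theorem hermitianOfSuper_map_left_of_odd {A : V →ₗ[ℂ] V}
    (hA0 : ∀ v ∈ V0, A v ∈ V1) (hA1 : ∀ v ∈ V1, A v ∈ V0)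
    (hskew0 : ∀ v ∈ V0, ∀ w : V, B (A v) w + B v (A w) = 0)
    (hskew1 : ∀ v ∈ V1, ∀ w : V, B (A v) w - B v (A w) = 0) (u v : V) :
    hermitianOfSuper hcompl B (A u) v = I * hermitianOfSuper hcompl B u (A v) := by
  have comm0 : ∀ x, π₀ (A x) = A (π₁ x) :=
    projection_apply_map_of_mapsTo hcompl.symm hcompl hA1 hA0
  have comm1 : ∀ x, π₁ (A x) = A (π₀ x) :=
    projection_apply_map_of_mapsTo hcompl hcompl.symm hA0 hA1
  have hs0 := hskew0 (π₀ u) (projection_apply_mem _ _) (π₁ v)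
  have hs1 := hskew1 (π₁ u) (projection_apply_mem _ _) (π₀ v)
  rw [hermitianOfSuper_apply, hermitianOfSuper_apply, comm0, comm0, comm1, comm1]
  linear_combination hs1 - I * hs0 + B (π₁ u) (A (π₀ v)) * I_mul_I

end SuperHermitian

theorem stmt_4_general
    (V : Type*) [AddCommGroup V] [Module ℂ V] [FiniteDimensional ℂ V]
    (V0 V1 : Submodule ℂ V) (hcompl : IsCompl V0 V1)
    (B : V → V → ℂ)
    -- `B` is ℂ-linear in the first argument
    (hB1 : ∀ (a : ℂ) (u u' v : V), B (a • u + u') v = a * B u v + B u' v)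
    -- `B` is conjugate-linear in the second argument
    (hB2 : ∀ (a : ℂ) (u v v' : V), B u (a • v + v') = (starRingEnd ℂ) a * B u v + B u v')
    -- `B` is super Hermitian symmetric
    (hsym00 : ∀ u ∈ V0, ∀ v ∈ V0, B u v = (starRingEnd ℂ) (B v u))
    (hsym11 : ∀ u ∈ V1, ∀ v ∈ V1, B u v = - (starRingEnd ℂ) (B v u))
    -- `B` is super positive
    (hpos0 : ∀ v ∈ V0, v ≠ 0 → ∃ t : ℝ, 0 < t ∧ B v v = (t : ℂ))
    (hpos1 : ∀ v ∈ V1, v ≠ 0 → ∃ t : ℝ, 0 < t ∧ B v v = Complex.I * (t : ℂ))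
    (S : Set (V →ₗ[ℂ] V))
    -- every `A ∈ S` is homogeneous and `B`-super-skew-adjoint
    (hS : ∀ A ∈ S,
      ((∀ v ∈ V0, A v ∈ V0) ∧ (∀ v ∈ V1, A v ∈ V1) ∧
        (∀ v : V, (v ∈ V0 ∨ v ∈ V1) → ∀ w : V, B (A v) w + B v (A w) = 0))
      ∨
      ((∀ v ∈ V0, A v ∈ V1) ∧ (∀ v ∈ V1, A v ∈ V0) ∧
        (∀ v ∈ V0, ∀ w : V, B (A v) w + B v (A w) = 0) ∧
        (∀ v ∈ V1, ∀ w : V, B (A v) w - B v (A w) = 0))) :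
    -- `V` is the internal direct sum of irreducible graded `S`-invariant subspaces
    ∃ (r : ℕ) (W : Fin r → Submodule ℂ V),
      (∀ i : Fin r,
        -- each `W i` is nonzero
        W i ≠ ⊥ ∧
        -- each `W i` is graded
        W i = (W i ⊓ V0) ⊔ (W i ⊓ V1) ∧
        -- each `W i` is `S`-invariant
        (∀ A ∈ S, ∀ w ∈ W i, A w ∈ W i) ∧
        -- each `W i` is irreducible: it contains no graded `S`-invariant
        -- subspace other than `0` and itself
        (∀ U : Submodule ℂ V, U ≤ W i → U = (U ⊓ V0) ⊔ (U ⊓ V1) →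
          (∀ A ∈ S, ∀ w ∈ U, A w ∈ U) → U = ⊥ ∨ U = W i)) ∧
      DirectSum.IsInternal W := by
  obtain ⟨β, rfl⟩ := exists_sesqForm_eq B hB1 hB2
  set T := insert (V0.projection V1 hcompl) S
  have mem_T : ∀ U, U ∈ jointInvtSubmodule T ↔
      U = U ⊓ V0 ⊔ U ⊓ V1 ∧ ∀ A ∈ S, ∀ w ∈ U, A w ∈ U := fun U => by
    rw [mem_jointInvtSubmodule, Set.forall_mem_insert, mem_invtSubmodule_projection_iff]
    rfl
  have adjoint_T : ∀ f ∈ T, ∃ c : ℂ, ∀ u v,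
      hermitianOfSuper hcompl β (f u) v = c * hermitianOfSuper hcompl β u (f v) := by
    rintro f (rfl | hf)
    · exact ⟨1, fun u v => by rw [one_mul, hermitianOfSuper_projection_left]⟩
    rcases hS f hf with ⟨hA0, hA1, hskew⟩ | ⟨hA0, hA1, hskew0, hskew1⟩
    · exact ⟨-1, fun u v => by
        rw [neg_one_mul, hermitianOfSuper_map_left_of_even hcompl β hA0 hA1 hskew]⟩
    · exact ⟨I, hermitianOfSuper_map_left_of_odd hcompl β hA0 hA1 hskew0 hskew1⟩
  have := complementedLattice_jointInvtSubmodule_of_sesqForm _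
    (conj_hermitianOfSuper hcompl β hsym00 hsym11)
    (fun _ => re_hermitianOfSuper_self_pos hcompl β hpos0 hpos1) adjoint_T
  obtain ⟨r, W, hatom, hW⟩ := exists_isInternal_isAtom_jointInvtSubmodule T
  refine ⟨r, fun i => W i, fun i => ?_, hW⟩
  obtain ⟨hgraded, hinv⟩ := (mem_T _).mp (W i).2
  refine ⟨fun h => (hatom i).1 (Subtype.ext h), hgraded, hinv, fun U hle hU hUinv => ?_⟩
  exact CompleteSublattice.eq_bot_or_eq_of_isAtom (hatom i) ((mem_T U).mpr ⟨hU, hUinv⟩) hle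

/-- paper's Proposition 2.2.
Let `V` be a finite-dimensional ℤ₂-graded complex vector space with a consistent,
super Hermitian symmetric, super positive sesquilinear form `B`, and `S` a set of
linear operators on `V`, each homogeneous and `B`-super-skew-adjoint.  Then `V` is
completely reducible: it is the internal direct sum of finitely many nonzero graded
`S`-invariant subspaces each of which contains no graded `S`-invariant subspace
other than `0` and itself. -/
theorem stmt_4
    (V : Type*) [AddCommGroup V] [Module ℂ V] [FiniteDimensional ℂ V]
    (V0 V1 : Submodule ℂ V) (hcompl : IsCompl V0 V1)
    (B : V → V → ℂ)
    -- `B` is ℂ-linear in the first argument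
    (hB1 : ∀ (a : ℂ) (u u' v : V), B (a • u + u') v = a * B u v + B u' v)
    -- `B` is conjugate-linear in the second argument
    (hB2 : ∀ (a : ℂ) (u v v' : V), B u (a • v + v') = (starRingEnd ℂ) a * B u v + B u v')
    -- `B` is consistent
    (hcons : ∀ u ∈ V0, ∀ v ∈ V1, B u v = 0 ∧ B v u = 0)
    -- `B` is super Hermitian symmetric
    (hsym00 : ∀ u ∈ V0, ∀ v ∈ V0, B u v = (starRingEnd ℂ) (B v u))
    (hsym01 : ∀ u ∈ V0, ∀ v ∈ V1, B u v = (starRingEnd ℂ) (B v u))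
    (hsym10 : ∀ u ∈ V1, ∀ v ∈ V0, B u v = (starRingEnd ℂ) (B v u))
    (hsym11 : ∀ u ∈ V1, ∀ v ∈ V1, B u v = - (starRingEnd ℂ) (B v u))
    -- `B` is super positive
    (hpos0 : ∀ v ∈ V0, v ≠ 0 → ∃ t : ℝ, 0 < t ∧ B v v = (t : ℂ))
    (hpos1 : ∀ v ∈ V1, v ≠ 0 → ∃ t : ℝ, 0 < t ∧ B v v = Complex.I * (t : ℂ))
    (S : Set (V →ₗ[ℂ] V))
    -- every `A ∈ S` is homogeneous and `B`-super-skew-adjoint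
    (hS : ∀ A ∈ S,
      ((∀ v ∈ V0, A v ∈ V0) ∧ (∀ v ∈ V1, A v ∈ V1) ∧
        (∀ v : V, (v ∈ V0 ∨ v ∈ V1) → ∀ w : V, B (A v) w + B v (A w) = 0))
      ∨
      ((∀ v ∈ V0, A v ∈ V1) ∧ (∀ v ∈ V1, A v ∈ V0) ∧
        (∀ v ∈ V0, ∀ w : V, B (A v) w + B v (A w) = 0) ∧
        (∀ v ∈ V1, ∀ w : V, B (A v) w - B v (A w) = 0))) :
    -- `V` is the internal direct sum of irreducible graded `S`-invariant subspaces
    ∃ (r : ℕ) (W : Fin r → Submodule ℂ V),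
      (∀ i : Fin r,
        -- each `W i` is nonzero
        W i ≠ ⊥ ∧
        -- each `W i` is graded
        W i = (W i ⊓ V0) ⊔ (W i ⊓ V1) ∧
        -- each `W i` is `S`-invariant
        (∀ A ∈ S, ∀ w ∈ W i, A w ∈ W i) ∧
        -- each `W i` is irreducible: it contains no graded `S`-invariant
        -- subspace other than `0` and itself
        (∀ U : Submodule ℂ V, U ≤ W i → U = (U ⊓ V0) ⊔ (U ⊓ V1) →
          (∀ A ∈ S, ∀ w ∈ U, A w ∈ U) → U = ⊥ ∨ U = W i)) ∧
      DirectSum.IsInternal W :=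
  stmt_4_general V V0 V1 hcompl B hB1 hB2 hsym00 hsym11 hpos0 hpos1 S hS
end

section
/- Let k be a natural number, V = ℂ^k, and Λ = ⋀ V the exterior algebra of V over ℂ. If W is a nonzero contraction-invariant subspace of Λ which contains no contraction-invariant subspace other than 0 and W itself, then W = ℂ·1. (Second assertion of the paper's Proposition 6.1: the only irreducible subrepresentation of the Grassmann algebra Λ_ℂ^k under the odd Abelian supergroup action is ℂ·1.) -/
open ExteriorAlgebra CliffordAlgebra

noncomputable section Stmt7Aux

variable (k : ℕ)

/-- Contraction by the `i`-th coordinate functional. -/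
def dOp (i : Fin k) : ExteriorAlgebra ℂ (Fin k → ℂ) →ₗ[ℂ] ExteriorAlgebra ℂ (Fin k → ℂ) :=
  CliffordAlgebra.contractLeft ((Pi.basisFun ℂ (Fin k)).coord i)

lemma dual_eq_sum (φ : Module.Dual ℂ (Fin k → ℂ)) :
    φ = ∑ i : Fin k, φ (Pi.basisFun ℂ (Fin k) i) • (Pi.basisFun ℂ (Fin k)).coord i := by
  refine (Pi.basisFun ℂ (Fin k)).ext fun j => ?_
  simp only [LinearMap.coe_sum, Finset.sum_apply, LinearMap.smul_apply, Module.Basis.coord_apply,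
    Pi.basisFun_apply, Module.Basis.repr_self, smul_eq_mul]
  rw [Finset.sum_eq_single j]
  · simp
  · intro b _ hbj
    simp [Finsupp.single_apply, Ne.symm hbj]
  · simp

lemma contract_zero_of_coords {y : ExteriorAlgebra ℂ (Fin k → ℂ)}
    (h : ∀ i, dOp k i y = 0) (φ : Module.Dual ℂ (Fin k → ℂ)) :
    CliffordAlgebra.contractLeft φ y = 0 := by
  have h' : ∀ i : Fin k,
      CliffordAlgebra.contractLeft ((Pi.basisFun ℂ (Fin k)).coord i) y = 0 := h
  rw [dual_eq_sum k φ, map_sum]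
  simp only [LinearMap.sum_apply, map_smul, LinearMap.smul_apply, h', smul_zero,
    Finset.sum_const_zero]

/-- The number operator. -/
def NOp : ExteriorAlgebra ℂ (Fin k → ℂ) →ₗ[ℂ] ExteriorAlgebra ℂ (Fin k → ℂ) :=
  ∑ i : Fin k,
    (LinearMap.mulLeft ℂ (ExteriorAlgebra.ι ℂ (Pi.basisFun ℂ (Fin k) i))).comp
      (CliffordAlgebra.contractLeft ((Pi.basisFun ℂ (Fin k)).coord i))

lemma NOp_apply (x : ExteriorAlgebra ℂ (Fin k → ℂ)) :
    NOp k x = ∑ i : Fin k, ExteriorAlgebra.ι ℂ (Pi.basisFun ℂ (Fin k) i) *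
      CliffordAlgebra.contractLeft ((Pi.basisFun ℂ (Fin k)).coord i) x := by
  simp [NOp]

lemma NOp_one : NOp k (1 : ExteriorAlgebra ℂ (Fin k → ℂ)) = 0 := by
  simp [NOp_apply, CliffordAlgebra.contractLeft_one]

lemma NOp_ι_mul (m : Fin k → ℂ) (x : ExteriorAlgebra ℂ (Fin k → ℂ)) :
    NOp k (ExteriorAlgebra.ι ℂ m * x)
      = ExteriorAlgebra.ι ℂ m * x + ExteriorAlgebra.ι ℂ m * NOp k x := by
  have swap : ∀ (a : Fin k → ℂ) (y : ExteriorAlgebra ℂ (Fin k → ℂ)),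
      ExteriorAlgebra.ι ℂ a * (ExteriorAlgebra.ι ℂ m * y)
        = -(ExteriorAlgebra.ι ℂ m * (ExteriorAlgebra.ι ℂ a * y)) := by
    intro a y
    have h : ExteriorAlgebra.ι ℂ a * ExteriorAlgebra.ι ℂ m
        = -(ExteriorAlgebra.ι ℂ m * ExteriorAlgebra.ι ℂ a) :=
      eq_neg_of_add_eq_zero_left (ExteriorAlgebra.ι_add_mul_swap (R := ℂ) a m)
    rw [← mul_assoc, h, neg_mul, mul_assoc]
  rw [NOp_apply, NOp_apply]
  simp only [CliffordAlgebra.contractLeft_ι_mul, mul_sub]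
  rw [Finset.sum_sub_distrib]
  have hA : ∑ i : Fin k, ExteriorAlgebra.ι ℂ (Pi.basisFun ℂ (Fin k) i) *
      ((Pi.basisFun ℂ (Fin k)).coord i m • x) = ExteriorAlgebra.ι ℂ m * x := by
    have hm : ∑ i : Fin k, (Pi.basisFun ℂ (Fin k)).coord i m • Pi.basisFun ℂ (Fin k) i = m := by
      simpa [Module.Basis.coord_apply] using (Pi.basisFun ℂ (Fin k)).sum_repr m
    calc ∑ i : Fin k, ExteriorAlgebra.ι ℂ (Pi.basisFun ℂ (Fin k) i) *
          ((Pi.basisFun ℂ (Fin k)).coord i m • x)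
        = (∑ i : Fin k, (Pi.basisFun ℂ (Fin k)).coord i m •
            ExteriorAlgebra.ι ℂ (Pi.basisFun ℂ (Fin k) i)) * x := by
          rw [Finset.sum_mul]
          exact Finset.sum_congr rfl fun i _ => by
            rw [smul_mul_assoc, mul_smul_comm]
      _ = ExteriorAlgebra.ι ℂ m * x := by
          congr 1
          conv_rhs => rw [← hm]
          rw [map_sum]
          simp only [map_smul]
  have hB : ∑ i : Fin k, ExteriorAlgebra.ι ℂ (Pi.basisFun ℂ (Fin k) i) *
      (ExteriorAlgebra.ι ℂ m *
        CliffordAlgebra.contractLeft ((Pi.basisFun ℂ (Fin k)).coord i) x)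
      = -(ExteriorAlgebra.ι ℂ m * ∑ i : Fin k, ExteriorAlgebra.ι ℂ (Pi.basisFun ℂ (Fin k) i) *
          CliffordAlgebra.contractLeft ((Pi.basisFun ℂ (Fin k)).coord i) x) := by
    rw [Finset.mul_sum, ← Finset.sum_neg_distrib]
    exact Finset.sum_congr rfl fun i _ => swap _ _
  rw [hA, hB, sub_neg_eq_add]

lemma NOp_ιMulti : ∀ (n : ℕ) (v : Fin n → (Fin k → ℂ)),
    NOp k (ExteriorAlgebra.ιMulti ℂ n v) = (n : ℂ) • ExteriorAlgebra.ιMulti ℂ n v := by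
  intro n
  induction n with
  | zero => intro v; rw [ExteriorAlgebra.ιMulti_zero_apply]; simp [NOp_one]
  | succ n ih =>
      intro v
      rw [ExteriorAlgebra.ιMulti_succ_apply, NOp_ι_mul, ih]
      rw [mul_smul_comm]
      push_cast
      module

lemma NOp_on_power (n : ℕ) (x : ExteriorAlgebra ℂ (Fin k → ℂ))
    (hx : x ∈ ⋀[ℂ]^n (Fin k → ℂ)) : NOp k x = (n : ℂ) • x := by
  rw [← ExteriorAlgebra.ιMulti_span_fixedDegree] at hx
  induction hx using Submodule.span_induction with
  | mem z hz => obtain ⟨v, rfl⟩ := hz; exact NOp_ιMulti k n v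
  | zero => simp
  | add a b _ _ ha hb => rw [map_add, ha, hb, smul_add]
  | smul c a _ ha => rw [map_smul, ha, smul_comm]

set_option maxHeartbeats 1000000 in
lemma mem_power_zero_of_NOp_eq_zero (x : ExteriorAlgebra ℂ (Fin k → ℂ))
    (hx : NOp k x = 0) : x ∈ ⋀[ℂ]^0 (Fin k → ℂ) := by
  classical
  set 𝒜 : ℕ → Submodule ℂ (ExteriorAlgebra ℂ (Fin k → ℂ)) :=
    fun n => ⋀[ℂ]^n (Fin k → ℂ) with h𝒜
  have hsum := DirectSum.sum_support_decompose 𝒜 x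
  -- the degree-`n` projection as a linear map
  set π : ℕ → (ExteriorAlgebra ℂ (Fin k → ℂ) →ₗ[ℂ] ExteriorAlgebra ℂ (Fin k → ℂ)) := fun n =>
    (𝒜 n).subtype ∘ₗ (DirectSum.component ℂ ℕ (fun i => 𝒜 i) n) ∘ₗ
      (DirectSum.decomposeLinearEquiv 𝒜).toLinearMap with hπ
  have hπ_same : ∀ (n : ℕ) (w : ExteriorAlgebra ℂ (Fin k → ℂ)), w ∈ 𝒜 n → π n w = w := by
    intro n w hw
    exact DirectSum.decompose_of_mem_same 𝒜 hw
  have hπ_ne : ∀ (i n : ℕ) (w : ExteriorAlgebra ℂ (Fin k → ℂ)), w ∈ 𝒜 i → i ≠ n → π n w = 0 := by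
    intro i n w hw hne
    exact DirectSum.decompose_of_mem_ne 𝒜 hw hne
  have h1 : (0 : ExteriorAlgebra ℂ (Fin k → ℂ)) =
      ∑ i ∈ (DirectSum.decompose 𝒜 x).support,
        (i : ℂ) • (DirectSum.decompose 𝒜 x i : ExteriorAlgebra ℂ (Fin k → ℂ)) := by
    rw [← hx]
    conv_lhs => rw [← hsum]
    rw [map_sum]
    exact Finset.sum_congr rfl fun i _ =>
      NOp_on_power k i _ (DirectSum.decompose 𝒜 x i).2
  have hzero : ∀ n : ℕ, n ≠ 0 →
      (DirectSum.decompose 𝒜 x n : ExteriorAlgebra ℂ (Fin k → ℂ)) = 0 := by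
    intro n hn
    by_cases hmem : n ∈ (DirectSum.decompose 𝒜 x).support
    · have h2 := congrArg (π n) h1
      rw [map_zero, map_sum] at h2
      simp only [map_smul] at h2
      rw [Finset.sum_eq_single_of_mem n hmem] at h2
      · rw [hπ_same n _ (DirectSum.decompose 𝒜 x n).2] at h2
        have hnc : (n : ℂ) ≠ 0 := Nat.cast_ne_zero.mpr hn
        exact (smul_eq_zero.mp h2.symm).resolve_left hnc
      · intro i _ hne
        rw [hπ_ne i n _ (DirectSum.decompose 𝒜 x i).2 hne, smul_zero]
    · rw [DFinsupp.notMem_support_iff.mp hmem]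
      rfl
  rw [← hsum]
  refine Submodule.sum_mem _ fun i _ => ?_
  by_cases h0 : i = 0
  · subst h0; exact (DirectSum.decompose 𝒜 x 0).2
  · rw [hzero i h0]; exact Submodule.zero_mem _

lemma mem_span_one_of_coords (x : ExteriorAlgebra ℂ (Fin k → ℂ))
    (h : ∀ i, dOp k i x = 0) :
    x ∈ Submodule.span ℂ {(1 : ExteriorAlgebra ℂ (Fin k → ℂ))} := by
  have h' : ∀ i : Fin k,
      CliffordAlgebra.contractLeft ((Pi.basisFun ℂ (Fin k)).coord i) x = 0 := h
  have hN : NOp k x = 0 := by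
    rw [NOp_apply]
    simp only [h', mul_zero, Finset.sum_const_zero]
  have hmem := mem_power_zero_of_NOp_eq_zero k x hN
  have h0 : (⋀[ℂ]^0 (Fin k → ℂ) : Submodule ℂ (ExteriorAlgebra ℂ (Fin k → ℂ)))
      = Submodule.span ℂ {(1 : ExteriorAlgebra ℂ (Fin k → ℂ))} := by
    rw [show (⋀[ℂ]^0 (Fin k → ℂ) : Submodule ℂ (ExteriorAlgebra ℂ (Fin k → ℂ)))
        = (LinearMap.range (ExteriorAlgebra.ι ℂ (M := Fin k → ℂ)) ^ 0) from rfl,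
      pow_zero, Submodule.one_eq_span]
  rwa [h0] at hmem

end Stmt7Aux

/-- second assertion of the paper's Proposition 6.1.
Let `Λ = ⋀ ℂ^k` be the exterior algebra of `V = ℂ^k` over `ℂ`.  If `W` is a nonzero
contraction-invariant subspace of `Λ` containing no contraction-invariant subspace
other than `0` and `W` itself, then `W = ℂ·1`. -/
theorem stmt_7 (k : ℕ) (W : Submodule ℂ (ExteriorAlgebra ℂ (Fin k → ℂ)))
    (hinv : ∀ φ : Module.Dual ℂ (Fin k → ℂ), ∀ x ∈ W, CliffordAlgebra.contractLeft φ x ∈ W)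
    (hne : W ≠ ⊥)
    (hirr : ∀ U : Submodule ℂ (ExteriorAlgebra ℂ (Fin k → ℂ)), U ≤ W →
      (∀ φ : Module.Dual ℂ (Fin k → ℂ), ∀ x ∈ U, CliffordAlgebra.contractLeft φ x ∈ U) →
      U = ⊥ ∨ U = W) :
    W = Submodule.span ℂ {(1 : ExteriorAlgebra ℂ (Fin k → ℂ))} := by
  classical
  obtain ⟨x, hxW, hx0⟩ := Submodule.exists_mem_ne_zero_of_ne_bot hne
  have key : ∀ (n : ℕ) (x : ExteriorAlgebra ℂ (Fin k → ℂ)), x ∈ W → x ≠ 0 →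
      (Finset.univ.filter fun i => dOp k i x ≠ 0).card ≤ n →
      ∃ y ∈ W, y ≠ 0 ∧ ∀ i, dOp k i y = 0 := by
    intro n
    induction n with
    | zero =>
        intro x hxW hx0 hcard
        refine ⟨x, hxW, hx0, fun i => ?_⟩
        by_contra hne'
        have hmem : i ∈ Finset.univ.filter fun i => dOp k i x ≠ 0 :=
          Finset.mem_filter.mpr ⟨Finset.mem_univ i, hne'⟩
        have := Finset.card_pos.mpr ⟨i, hmem⟩
        omega
    | succ n ih =>
        intro x hxW hx0 hcard
        by_cases hall : ∀ i, dOp k i x = 0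
        · exact ⟨x, hxW, hx0, hall⟩
        push_neg at hall
        obtain ⟨i, hi⟩ := hall
        have hiW : dOp k i x ∈ W := hinv _ x hxW
        have hsub : (Finset.univ.filter fun j => dOp k j (dOp k i x) ≠ 0) ⊆
            (Finset.univ.filter fun j => dOp k j x ≠ 0).erase i := by
          intro j hj
          rw [Finset.mem_filter] at hj
          refine Finset.mem_erase.mpr ⟨?_, Finset.mem_filter.mpr ⟨Finset.mem_univ _, ?_⟩⟩
          · rintro rfl
            exact hj.2 (CliffordAlgebra.contractLeft_contractLeft _ x)
          · intro hjx
            apply hj.2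
            show CliffordAlgebra.contractLeft _ (CliffordAlgebra.contractLeft _ x) = 0
            rw [CliffordAlgebra.contractLeft_comm]
            have hjx' : CliffordAlgebra.contractLeft
                ((Pi.basisFun ℂ (Fin k)).coord j) x = 0 := hjx
            rw [hjx', map_zero, neg_zero]
        have hmem : i ∈ Finset.univ.filter fun j => dOp k j x ≠ 0 :=
          Finset.mem_filter.mpr ⟨Finset.mem_univ _, hi⟩
        have hcard' : (Finset.univ.filter fun j => dOp k j (dOp k i x) ≠ 0).card ≤ n := by
          have h1 := Finset.card_le_card hsub
          rw [Finset.card_erase_of_mem hmem] at h1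
          omega
        exact ih (dOp k i x) hiW hi hcard'
  obtain ⟨y, hyW, hy0, hyk⟩ := key _ x hxW hx0 le_rfl
  have hyK : ∀ φ : Module.Dual ℂ (Fin k → ℂ), CliffordAlgebra.contractLeft φ y = 0 :=
    contract_zero_of_coords k hyk
  set K : Submodule ℂ (ExteriorAlgebra ℂ (Fin k → ℂ)) :=
    ⨅ φ : Module.Dual ℂ (Fin k → ℂ), LinearMap.ker (CliffordAlgebra.contractLeft φ) with hK
  have hyKmem : y ∈ K := Submodule.mem_iInf _ |>.mpr fun φ => LinearMap.mem_ker.mpr (hyK φ)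
  have hUinv : ∀ φ : Module.Dual ℂ (Fin k → ℂ), ∀ z ∈ W ⊓ K,
      CliffordAlgebra.contractLeft φ z ∈ W ⊓ K := by
    intro φ z hz
    have hz0 : CliffordAlgebra.contractLeft φ z = 0 :=
      LinearMap.mem_ker.mp ((Submodule.mem_iInf _).mp hz.2 φ)
    rw [hz0]
    exact Submodule.zero_mem _
  have hWK : W ≤ K := by
    rcases hirr (W ⊓ K) inf_le_left hUinv with h | h
    · exfalso
      have hy' : y ∈ W ⊓ K := Submodule.mem_inf.mpr ⟨hyW, hyKmem⟩
      rw [h] at hy'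
      exact hy0 (Submodule.mem_bot ℂ |>.mp hy')
    · rw [← h]; exact inf_le_right
  apply le_antisymm
  · intro w hw
    have hwk : ∀ i, dOp k i w = 0 := fun i =>
      LinearMap.mem_ker.mp ((Submodule.mem_iInf _).mp (hWK hw) _)
    exact mem_span_one_of_coords k w hwk
  · have hy1 : y ∈ Submodule.span ℂ {(1 : ExteriorAlgebra ℂ (Fin k → ℂ))} :=
      mem_span_one_of_coords k y hyk
    obtain ⟨c, hc⟩ := Submodule.mem_span_singleton.mp hy1
    have hc0 : c ≠ 0 := by rintro rfl; rw [zero_smul] at hc; exact hy0 hc.symm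
    have h1W : (1 : ExteriorAlgebra ℂ (Fin k → ℂ)) ∈ W := by
      have hmem : c⁻¹ • y ∈ W := Submodule.smul_mem _ _ hyW
      rwa [← hc, smul_smul, inv_mul_cancel₀ hc0, one_smul] at hmem
    exact (Submodule.span_singleton_le_iff_mem _ _).mpr h1W
end

section
/- Let k ≥ 1, V = ℂ^k, and Λ = ⋀ V the exterior algebra of V over ℂ. Then the contraction-invariant line ℂ·1 has no contraction-invariant complement in Λ: there is no contraction-invariant subspace C of Λ with ℂ·1 ∩ C = 0 and ℂ·1 + C = Λ. Consequently, Λ is not the internal direct sum of any family of contraction-invariant subspaces each of which contains no contraction-invariant subspace other than 0 and itself. (First assertion of the paper's Proposition 6.1: Λ_ℂ^k is not completely reducible as a representation of the odd Abelian supergroup G₋, hence not unitary.) -/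
namespace Stmt8Aux

open CliffordAlgebra

/-- The coordinate functionals on `Fin k → ℂ`. -/
noncomputable def eps (k : ℕ) (i : Fin k) : Module.Dual ℂ (Fin k → ℂ) :=
  LinearMap.proj i

/-- Iterated contraction along a list of coordinate indices. -/
noncomputable def chain (k : ℕ) : List (Fin k) → ExteriorAlgebra ℂ (Fin k → ℂ) →
    ExteriorAlgebra ℂ (Fin k → ℂ)
  | [], x => x
  | i :: l, x => contractLeft (eps k i) (chain k l x)

lemma chain_mem (k : ℕ) (U : Submodule ℂ (ExteriorAlgebra ℂ (Fin k → ℂ)))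
    (hinv : ∀ φ : Module.Dual ℂ (Fin k → ℂ), ∀ x ∈ U, contractLeft φ x ∈ U)
    (l : List (Fin k)) (x : ExteriorAlgebra ℂ (Fin k → ℂ)) (hx : x ∈ U) :
    chain k l x ∈ U := by
  induction l with
  | nil => exact hx
  | cons i l ih => exact hinv _ _ ih

/-- A chain with a repeated index vanishes. -/
lemma chain_dup (k : ℕ) (i : Fin k) (l₂ l₃ : List (Fin k))
    (x : ExteriorAlgebra ℂ (Fin k → ℂ)) :
    chain k (i :: (l₂ ++ i :: l₃)) x = 0 := by
  induction l₂ with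
  | nil =>
    show contractLeft (eps k i) (contractLeft (eps k i) (chain k l₃ x)) = 0
    exact contractLeft_contractLeft _ _
  | cons j l₂ ih =>
    show contractLeft (eps k i) (contractLeft (eps k j) (chain k (l₂ ++ i :: l₃) x)) = 0
    rw [contractLeft_comm]
    have : contractLeft (eps k i) (chain k (l₂ ++ i :: l₃) x) = 0 := ih
    rw [this, map_zero, neg_zero]

/-- If all coordinate contractions kill `y`, then all contractions kill `y`. -/
lemma contract_eq_zero (k : ℕ) (y : ExteriorAlgebra ℂ (Fin k → ℂ))
    (h : ∀ i, contractLeft (eps k i) y = 0) (φ : Module.Dual ℂ (Fin k → ℂ)) :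
    contractLeft φ y = 0 := by
  have hφ : φ = ∑ i : Fin k, φ (fun j => if i = j then 1 else 0) • eps k i := by
    apply LinearMap.ext
    intro v
    rw [LinearMap.pi_apply_eq_sum_univ φ v]
    simp [eps, mul_comm]
  rw [hφ, map_sum]
  simp only [LinearMap.sum_apply, map_smul, LinearMap.smul_apply, h, smul_zero]
  exact Finset.sum_const_zero

/-- Any nonzero contraction-invariant subspace contains a nonzero element killed by all
contractions. -/
lemma exists_in_ker (k : ℕ) (U : Submodule ℂ (ExteriorAlgebra ℂ (Fin k → ℂ)))
    (hinv : ∀ φ : Module.Dual ℂ (Fin k → ℂ), ∀ x ∈ U, contractLeft φ x ∈ U)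
    (x : ExteriorAlgebra ℂ (Fin k → ℂ)) (hx : x ∈ U) (hx0 : x ≠ 0) :
    ∃ y ∈ U, y ≠ 0 ∧ ∀ φ : Module.Dual ℂ (Fin k → ℂ), contractLeft φ y = 0 := by
  suffices h : ∀ n (l : List (Fin k)), l.Nodup → k ≤ l.length + n → chain k l x ≠ 0 →
      ∃ y ∈ U, y ≠ 0 ∧ ∀ φ : Module.Dual ℂ (Fin k → ℂ), contractLeft φ y = 0 by
    exact h k [] (by simp) (by simp) hx0
  intro n
  induction n with
  | zero =>
    intro l hnd hlen hne
    have hall : ∀ i : Fin k, i ∈ l := by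
      intro i
      have h1 : l.toFinset.card = l.length := List.toFinset_card_of_nodup hnd
      have h2 : l.toFinset = Finset.univ := by
        apply Finset.eq_univ_of_card
        have := Finset.card_le_univ l.toFinset
        simp only [Finset.card_univ, Fintype.card_fin] at *
        omega
      have : i ∈ l.toFinset := h2 ▸ Finset.mem_univ i
      simpa using this
    have hzero : ∀ i, contractLeft (eps k i) (chain k l x) = 0 := by
      intro i
      obtain ⟨l₂, l₃, rfl⟩ := List.append_of_mem (hall i)
      exact chain_dup k i l₂ l₃ x
    exact ⟨chain k l x, chain_mem k U hinv l x hx, hne,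
      contract_eq_zero k _ hzero⟩
  | succ n ih =>
    intro l hnd hlen hne
    by_cases hc : ∀ i, contractLeft (eps k i) (chain k l x) = 0
    · exact ⟨chain k l x, chain_mem k U hinv l x hx, hne, contract_eq_zero k _ hc⟩
    · push_neg at hc
      obtain ⟨i, hi⟩ := hc
      have hil : i ∉ l := by
        intro hmem
        obtain ⟨l₂, l₃, rfl⟩ := List.append_of_mem hmem
        exact hi (chain_dup k i l₂ l₃ x)
      exact ih (i :: l) (List.nodup_cons.mpr ⟨hil, hnd⟩)
        (by simp only [List.length_cons]; omega) hi

end Stmt8Aux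

set_option maxHeartbeats 1000000 in
open Stmt8Aux CliffordAlgebra in
/-- first assertion of the paper's Proposition 6.1.
Let `k ≥ 1` and `Λ = ⋀ ℂ^k`.  The contraction-invariant line `ℂ·1` has no
contraction-invariant complement in `Λ`; consequently `Λ` is not the internal
direct sum of any family of contraction-invariant subspaces each of which contains
no contraction-invariant subspace other than `0` and itself. -/
theorem stmt_8 (k : ℕ) (hk : 1 ≤ k) :
    -- no contraction-invariant complement of `ℂ·1`
    (¬ ∃ C : Submodule ℂ (ExteriorAlgebra ℂ (Fin k → ℂ)),
      (∀ φ : Module.Dual ℂ (Fin k → ℂ), ∀ x ∈ C, CliffordAlgebra.contractLeft φ x ∈ C) ∧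
      Submodule.span ℂ {(1 : ExteriorAlgebra ℂ (Fin k → ℂ))} ⊓ C = ⊥ ∧
      Submodule.span ℂ {(1 : ExteriorAlgebra ℂ (Fin k → ℂ))} ⊔ C = ⊤) ∧
    -- `Λ` is not completely reducible
    (¬ ∃ (ι : Type) (_ : DecidableEq ι)
        (W : ι → Submodule ℂ (ExteriorAlgebra ℂ (Fin k → ℂ))),
      (∀ i : ι,
        (∀ φ : Module.Dual ℂ (Fin k → ℂ), ∀ x ∈ W i, CliffordAlgebra.contractLeft φ x ∈ W i) ∧
        (∀ U : Submodule ℂ (ExteriorAlgebra ℂ (Fin k → ℂ)), U ≤ W i →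
          (∀ φ : Module.Dual ℂ (Fin k → ℂ), ∀ x ∈ U, CliffordAlgebra.contractLeft φ x ∈ U) →
          U = ⊥ ∨ U = W i)) ∧
      DirectSum.IsInternal W) := by
  set i0 : Fin k := ⟨0, hk⟩
  set e : Fin k → ℂ := Pi.single i0 1 with he
  set φ0 : Module.Dual ℂ (Fin k → ℂ) := eps k i0 with hφ0
  set v : ExteriorAlgebra ℂ (Fin k → ℂ) :=
    CliffordAlgebra.ι (0 : QuadraticForm ℂ (Fin k → ℂ)) e with hv
  have hcv : contractLeft φ0 v = 1 := by
    rw [hv, contractLeft_ι]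
    simp [hφ0, eps, he]
  constructor
  · rintro ⟨C, hinv, hbot, htop⟩
    have hmem : v ∈ Submodule.span ℂ {(1 : ExteriorAlgebra ℂ (Fin k → ℂ))} ⊔ C :=
      htop ▸ Submodule.mem_top
    rw [Submodule.mem_sup] at hmem
    obtain ⟨y, hy, z, hz, hyz⟩ := hmem
    obtain ⟨a, rfl⟩ := Submodule.mem_span_singleton.mp hy
    have h1 : contractLeft φ0 z = 1 := by
      have := congrArg (contractLeft φ0) hyz
      rw [map_add, hcv, map_smul] at this
      rw [contractLeft_one] at this
      rwa [smul_zero, zero_add] at this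
    have hone : (1 : ExteriorAlgebra ℂ (Fin k → ℂ)) ∈
        Submodule.span ℂ {(1 : ExteriorAlgebra ℂ (Fin k → ℂ))} ⊓ C :=
      ⟨Submodule.mem_span_singleton_self 1, h1 ▸ hinv φ0 z hz⟩
    rw [hbot] at hone
    exact one_ne_zero (Submodule.mem_bot ℂ |>.mp hone)
  · rintro ⟨ιt, _, W, hW, hint⟩
    set K : Submodule ℂ (ExteriorAlgebra ℂ (Fin k → ℂ)) :=
      ⨅ φ : Module.Dual ℂ (Fin k → ℂ), LinearMap.ker (contractLeft φ) with hK
    have hWK : ∀ i, W i ≤ K := by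
      intro i
      rcases eq_or_ne (W i) ⊥ with h | h
      · rw [h]; exact bot_le
      · obtain ⟨x, hxW, hx0⟩ := Submodule.exists_mem_ne_zero_of_ne_bot h
        obtain ⟨y, hyW, hy0, hyk⟩ := exists_in_ker k (W i) (hW i).1 x hxW hx0
        have hUinv : ∀ φ : Module.Dual ℂ (Fin k → ℂ), ∀ x ∈ W i ⊓ K,
            contractLeft φ x ∈ W i ⊓ K := by
          rintro φ x ⟨hx1, hx2⟩
          have : contractLeft φ x = 0 := by
            have := Submodule.mem_iInf _ |>.mp hx2 φ
            exact LinearMap.mem_ker.mp this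
          rw [this]
          exact Submodule.zero_mem _
        rcases (hW i).2 (W i ⊓ K) inf_le_left hUinv with h0 | h0
        · exfalso
          have : y ∈ W i ⊓ K := ⟨hyW, Submodule.mem_iInf _ |>.mpr fun φ =>
            LinearMap.mem_ker.mpr (hyk φ)⟩
          rw [h0] at this
          exact hy0 (Submodule.mem_bot ℂ |>.mp this)
        · exact h0 ▸ inf_le_right
    have htop : (⊤ : Submodule ℂ (ExteriorAlgebra ℂ (Fin k → ℂ))) ≤ K := by
      rw [← hint.submodule_iSup_eq_top]
      exact iSup_le hWK
    have hvK : v ∈ K := htop Submodule.mem_top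
    have : contractLeft φ0 v = 0 :=
      LinearMap.mem_ker.mp (Submodule.mem_iInf _ |>.mp hvK φ0)
    rw [hcv] at this
    exact one_ne_zero this
end

section
/- Let k ≥ 1, V = ℂ^k, and Λ = ⋀ V the exterior algebra of V over ℂ, regarded as a ℤ₂-graded complex vector space with even part Λ₀ spanned by products of evenly many vectors and odd part Λ₁ spanned by products of oddly many vectors. Then there exists no consistent, super positive sesquilinear form B on Λ such that every left contraction operator ι_φ (φ ∈ V*) is B-super-skew-adjoint (each ι_φ is an odd operator on Λ). (Part of the paper's Proposition 6.1: the Grassmann algebra Λ_ℂ^k carries no invariant super Hermitian metric, i.e. the representation is not unitary.) -/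
/-- part of the paper's Proposition 6.1.
Let `k ≥ 1` and `Λ = ⋀ ℂ^k`, a ℤ₂-graded complex vector space with even part `Λ₀`
and odd part `Λ₁` (the even/odd exterior degree parts).  There exists no consistent,
super positive sesquilinear form `B` on `Λ` such that every left contraction
operator `ι_φ` (`φ ∈ V*`), which is odd, is `B`-super-skew-adjoint. -/
theorem stmt_9 (k : ℕ) (hk : 1 ≤ k)
    (Λ0 Λ1 : Submodule ℂ (ExteriorAlgebra ℂ (Fin k → ℂ)))
    (hΛ0 : Λ0 = CliffordAlgebra.evenOdd (0 : QuadraticForm ℂ (Fin k → ℂ)) 0)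
    (hΛ1 : Λ1 = CliffordAlgebra.evenOdd (0 : QuadraticForm ℂ (Fin k → ℂ)) 1) :
    ¬ ∃ B : ExteriorAlgebra ℂ (Fin k → ℂ) → ExteriorAlgebra ℂ (Fin k → ℂ) → ℂ,
      -- `B` is ℂ-linear in the first argument
      (∀ (a : ℂ) (u u' v : ExteriorAlgebra ℂ (Fin k → ℂ)),
        B (a • u + u') v = a * B u v + B u' v) ∧
      -- `B` is conjugate-linear in the second argument
      (∀ (a : ℂ) (u v v' : ExteriorAlgebra ℂ (Fin k → ℂ)),
        B u (a • v + v') = (starRingEnd ℂ) a * B u v + B u v') ∧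
      -- `B` is consistent
      (∀ u ∈ Λ0, ∀ v ∈ Λ1, B u v = 0 ∧ B v u = 0) ∧
      -- `B` is super positive
      (∀ v ∈ Λ0, v ≠ 0 → ∃ t : ℝ, 0 < t ∧ B v v = (t : ℂ)) ∧
      (∀ v ∈ Λ1, v ≠ 0 → ∃ t : ℝ, 0 < t ∧ B v v = Complex.I * (t : ℂ)) ∧
      -- every contraction `ι_φ` is `B`-super-skew-adjoint:
      -- `B (ι_φ v) w + (-1)^|v| * B v (ι_φ w) = 0`
      (∀ φ : Module.Dual ℂ (Fin k → ℂ),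
        (∀ v ∈ Λ0, ∀ w : ExteriorAlgebra ℂ (Fin k → ℂ),
          B (CliffordAlgebra.contractLeft φ v) w + B v (CliffordAlgebra.contractLeft φ w) = 0) ∧
        (∀ v ∈ Λ1, ∀ w : ExteriorAlgebra ℂ (Fin k → ℂ),
          B (CliffordAlgebra.contractLeft φ v) w - B v (CliffordAlgebra.contractLeft φ w) = 0)) := by
  rintro ⟨B, hlin, hconj, hcons, hpos0, hpos1, hskew⟩
  set Q : QuadraticForm ℂ (Fin k → ℂ) := 0
  set i0 : Fin k := ⟨0, hk⟩
  set e : Fin k → ℂ := Pi.single i0 1 with he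
  set φ : Module.Dual ℂ (Fin k → ℂ) := LinearMap.proj i0 with hφ
  have hφe : φ e = 1 := by simp [hφ, he]
  have hB0 : ∀ u, B u 0 = 0 := by
    intro u
    have h := hconj 1 u 0 0
    simp only [one_smul, add_zero, map_one, one_mul] at h
    linear_combination -h
  have hmem1 : CliffordAlgebra.ι Q e ∈ Λ1 := by
    rw [hΛ1]; exact CliffordAlgebra.ι_mem_evenOdd_one Q e
  have h := (hskew φ).2 (CliffordAlgebra.ι Q e) hmem1 1
  rw [CliffordAlgebra.contractLeft_ι, CliffordAlgebra.contractLeft_one, hφe, map_one, hB0,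
    sub_zero] at h
  have hmem0 : (1 : ExteriorAlgebra ℂ (Fin k → ℂ)) ∈ Λ0 := by
    rw [hΛ0]; exact SetLike.one_mem_graded _
  obtain ⟨t, ht, hBt⟩ := hpos0 1 hmem0 one_ne_zero
  rw [h] at hBt
  exact absurd hBt.symm (by exact_mod_cast ht.ne')
end

section
/- Let k ≥ 1, V = ℂ^k, and Λ = ⋀ V the exterior algebra of V over ℂ with its ℤ₂-grading Λ = Λ₀ ⊕ Λ₁ by even/odd exterior degree. Let W be a contraction-invariant subspace of Λ which is graded (W is the sum of W ∩ Λ₀ and W ∩ Λ₁), with W ≠ 0 and W ≠ ℂ·1. Then there exists no consistent, super positive sesquilinear form B on W such that for every φ ∈ V* the restriction of ι_φ to W is B-super-skew-adjoint. (Paper's Proposition 6.2: the only unitarizable subrepresentation of Λ_ℂ^k is ℂ·1.) -/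
/-!
For odd `v ∈ W`, the even vector `w = ι_φ v` satisfies `B(w, w) = B(v, ι_φ ι_φ v) = 0` by
super-skew-adjointness, so `w = 0` by positivity. A vector killed by every contraction is a
scalar, because the number operator `∑ eᵢ ∧ ι_{eᵢ*}` acts as multiplication by `n` in
degree `n`. Hence the odd part of `W` vanishes, then so do all contractions of `W`, and `W ⊆ ℂ·1`.
-/

open CliffordAlgebra

section Contraction

variable {R M : Type*} [CommRing R] [AddCommGroup M] [Module R M] {Q : QuadraticForm R M}
  (d : Module.Dual R M)

theorem contractLeft_mem_range_ι_pow_pred {n : ℕ} {x : CliffordAlgebra Q}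
    (hx : x ∈ LinearMap.range (ι Q) ^ n) :
    contractLeft d x ∈ LinearMap.range (ι Q) ^ (n - 1) := by
  induction hx using Submodule.pow_induction_on_left' with
  | algebraMap r => simp [contractLeft_algebraMap]
  | add x y i _ _ ihx ihy => rw [map_add]; exact add_mem ihx ihy
  | mem_mul m hm i x hx ih =>
    obtain ⟨v, rfl⟩ := hm
    rw [contractLeft_ι_mul, Nat.succ_sub_one]
    refine sub_mem (Submodule.smul_mem _ _ hx) ?_
    rcases i with _ | i
    · obtain ⟨r, rfl⟩ := Submodule.mem_one.mp (pow_zero (LinearMap.range (ι Q)) ▸ hx)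
      simp [contractLeft_algebraMap]
    · rw [pow_succ']
      exact Submodule.mul_mem_mul (LinearMap.mem_range_self _ v) ih

theorem contractLeft_mem_evenOdd_add_one {i : ZMod 2} {x : CliffordAlgebra Q}
    (hx : x ∈ evenOdd Q i) : contractLeft d x ∈ evenOdd Q (i + 1) := by
  induction hx using Submodule.iSup_induction' with
  | mem j x hx =>
    obtain ⟨_ | n, rfl⟩ := j
    · obtain ⟨r, rfl⟩ := Submodule.mem_one.mp hx
      simp [contractLeft_algebraMap]
    · refine Submodule.mem_iSup_of_mem ⟨n, ?_⟩ (contractLeft_mem_range_ι_pow_pred d hx)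
      push_cast
      rw [add_assoc, show (1 + 1 : ZMod 2) = 0 from rfl, add_zero]
  | zero => simp
  | add x y _ _ hx hy => rw [map_add]; exact add_mem hx hy

theorem contractLeft_eq_zero_of_mem_evenOdd_one {S : Type*} [AddGroup S]
    {W : Submodule R (CliffordAlgebra Q)} {B : CliffordAlgebra Q → CliffordAlgebra Q → S}
    (hinv : ∀ x ∈ W, contractLeft d x ∈ W) (hB_zero : ∀ v ∈ W, B v 0 = 0)
    (hB_even : ∀ v ∈ W ⊓ evenOdd Q 0, v ≠ 0 → B v v ≠ 0)
    (hskew : ∀ v ∈ W ⊓ evenOdd Q 1, ∀ w ∈ W,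
      B (contractLeft d v) w - B v (contractLeft d w) = 0)
    {v : CliffordAlgebra Q} (hv : v ∈ W ⊓ evenOdd Q 1) : contractLeft d v = 0 := by
  obtain ⟨hvW, hv_odd⟩ := Submodule.mem_inf.mp hv
  have hw_even : contractLeft d v ∈ evenOdd Q 0 := by
    simpa only [show (1 + 1 : ZMod 2) = 0 from rfl] using contractLeft_mem_evenOdd_add_one d hv_odd
  by_contra hw
  refine hB_even _ (Submodule.mem_inf.mpr ⟨hinv v hvW, hw_even⟩) hw ?_
  simpa [contractLeft_contractLeft, hB_zero v hvW] using hskew v hv (contractLeft d v) (hinv v hvW)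

theorem span_one_le_evenOdd_zero : Submodule.span R {(1 : CliffordAlgebra Q)} ≤ evenOdd Q 0 :=
  Submodule.one_eq_span (R := R) (A := CliffordAlgebra Q) ▸ one_le_evenOdd_zero Q

end Contraction

namespace ExteriorAlgebra

section NumberOperator

variable {R M I : Type*} [CommRing R] [AddCommGroup M] [Module R M] [Fintype I]
  (b : Module.Basis I R M)

noncomputable def numberOp : ExteriorAlgebra R M →ₗ[R] ExteriorAlgebra R M :=
  ∑ i, LinearMap.mulLeft R (ι R (b i)) ∘ₗ contractLeft (b.coord i)

theorem numberOp_apply (x : ExteriorAlgebra R M) :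
    numberOp b x = ∑ i, ι R (b i) * contractLeft (b.coord i) x := by
  simp [numberOp, LinearMap.sum_apply]

theorem sum_coord_smul_ι (v : M) : ∑ i, b.coord i v • ι R (b i) = ι R v := by
  simp_rw [← map_smul, ← map_sum, Module.Basis.coord_apply, b.sum_repr]

theorem numberOp_of_mem {n : ℕ} {x : ExteriorAlgebra R M} (hx : x ∈ ⋀[R]^n M) :
    numberOp b x = n • x := by
  induction hx using Submodule.pow_induction_on_left' with
  | algebraMap r => simp [numberOp_apply, contractLeft_algebraMap]
  | add x y i _ _ ihx ihy => rw [map_add, ihx, ihy, smul_add]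
  | mem_mul m hm i x _ ih =>
    obtain ⟨v, rfl⟩ := hm
    have hterm : ∀ j, ι R (b j) * contractLeft (b.coord j) (ι R v * x) =
        b.coord j v • (ι R (b j) * x) + ι R v * (ι R (b j) * contractLeft (b.coord j) x) := by
      intro j
      rw [contractLeft_ι_mul, mul_sub, mul_smul_comm, ← mul_assoc, ← mul_assoc,
        eq_neg_of_add_eq_zero_left (ι_add_mul_swap (b j) v), neg_mul, sub_neg_eq_add]
    rw [numberOp_apply, Finset.sum_congr rfl fun j _ => hterm j, Finset.sum_add_distrib,
      ← Finset.mul_sum, ← numberOp_apply, ih]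
    simp_rw [← smul_mul_assoc]
    rw [← Finset.sum_mul, sum_coord_smul_ι, mul_smul_comm, smul_mul_assoc, succ_nsmul']

theorem decompose_numberOp (x : ExteriorAlgebra R M) (n : ℕ) :
    (DirectSum.decompose (fun i : ℕ => ⋀[R]^i M) (numberOp b x) n : ExteriorAlgebra R M) =
      n • (DirectSum.decompose (fun i : ℕ => ⋀[R]^i M) x n : ExteriorAlgebra R M) := by
  induction x using DirectSum.Decomposition.inductionOn (fun i : ℕ => ⋀[R]^i M) with
  | zero => simp
  | add x y hx hy => simp only [map_add, DirectSum.decompose_add, DirectSum.add_apply,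
      Submodule.coe_add, hx, hy, smul_add]
  | @homogeneous m y =>
    rw [numberOp_of_mem b y.2]
    obtain rfl | hmn := eq_or_ne m n
    · rw [DirectSum.decompose_of_mem_same (fun i : ℕ => ⋀[R]^i M) (nsmul_mem y.2 m),
        DirectSum.decompose_of_mem_same (fun i : ℕ => ⋀[R]^i M) y.2]
    · rw [DirectSum.decompose_of_mem_ne (fun i : ℕ => ⋀[R]^i M) (nsmul_mem y.2 m) hmn,
        DirectSum.decompose_of_mem_ne (fun i : ℕ => ⋀[R]^i M) y.2 hmn, smul_zero]

end NumberOperator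

theorem mem_span_one_of_forall_contractLeft_eq_zero {K V : Type*} [Field K] [CharZero K]
    [AddCommGroup V] [Module K V] [Module.Finite K V] {x : ExteriorAlgebra K V}
    (hx : ∀ d : Module.Dual K V, contractLeft d x = 0) : x ∈ Submodule.span K {1} := by
  let ℳ := fun i : ℕ => ⋀[K]^i V
  have hcomp : ∀ n ≠ 0, DirectSum.decompose ℳ x n = 0 := by
    intro n hn
    have h := decompose_numberOp (Module.finBasis K V) x n
    rw [numberOp_apply] at h
    simp only [hx, mul_zero, Finset.sum_const_zero, DirectSum.decompose_zero,
      DirectSum.zero_apply, ZeroMemClass.coe_zero] at h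
    rw [← Nat.cast_smul_eq_nsmul K, eq_comm, smul_eq_zero] at h
    exact Subtype.ext (h.resolve_left (Nat.cast_ne_zero.mpr hn))
  have hx0 : x ∈ ℳ 0 := by
    have h : DirectSum.decompose ℳ x = DirectSum.of _ 0 (DirectSum.decompose ℳ x 0) := by
      ext n : 1
      obtain rfl | hn := eq_or_ne n 0
      · rw [DirectSum.of_eq_same]
      · rw [DirectSum.of_eq_of_ne _ _ _ hn, hcomp n hn]
    rw [← (DirectSum.decompose ℳ).symm_apply_apply x, h, DirectSum.decompose_symm_of]
    exact SetLike.coe_mem _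
  rwa [← Submodule.one_eq_span, ← pow_zero (LinearMap.range (ι K))]

end ExteriorAlgebra

section GradedSubspace

variable {K V : Type*} [Field K] [CharZero K] [AddCommGroup V] [Module K V] [Module.Finite K V]
  {W : Submodule K (ExteriorAlgebra K V)}

theorem inf_evenOdd_one_eq_bot_of_forall_contractLeft_eq_zero
    (h : ∀ d : Module.Dual K V, ∀ v ∈ W ⊓ evenOdd 0 1, contractLeft d v = 0) :
    W ⊓ evenOdd (0 : QuadraticForm K V) 1 = ⊥ := by
  refine eq_bot_iff.mpr fun v hv => ?_
  have hv_even := span_one_le_evenOdd_zero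
    (ExteriorAlgebra.mem_span_one_of_forall_contractLeft_eq_zero fun d => h d v hv)
  exact (evenOdd_isCompl (0 : QuadraticForm K V)).disjoint.le_bot ⟨hv_even, hv.2⟩

theorem le_span_one_of_inf_evenOdd_one_eq_bot
    (hinv : ∀ d : Module.Dual K V, ∀ x ∈ W, contractLeft d x ∈ W)
    (hgraded : W = W ⊓ evenOdd 0 0 ⊔ W ⊓ evenOdd 0 1)
    (hodd : W ⊓ evenOdd (0 : QuadraticForm K V) 1 = ⊥) :
    W ≤ Submodule.span K {1} := by
  intro v hv
  have hv_even : v ∈ evenOdd (0 : QuadraticForm K V) 0 := by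
    rw [hgraded, hodd, sup_bot_eq] at hv
    exact hv.2
  refine ExteriorAlgebra.mem_span_one_of_forall_contractLeft_eq_zero fun d => ?_
  have h := contractLeft_mem_evenOdd_add_one d hv_even
  rw [zero_add] at h
  exact (Submodule.mem_bot K).mp (hodd ▸ Submodule.mem_inf.mpr ⟨hinv d v hv, h⟩)

end GradedSubspace

theorem stmt_10_general (k : ℕ)
    (Λ0 Λ1 : Submodule ℂ (ExteriorAlgebra ℂ (Fin k → ℂ)))
    (hΛ0 : Λ0 = CliffordAlgebra.evenOdd (0 : QuadraticForm ℂ (Fin k → ℂ)) 0)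
    (hΛ1 : Λ1 = CliffordAlgebra.evenOdd (0 : QuadraticForm ℂ (Fin k → ℂ)) 1)
    (W : Submodule ℂ (ExteriorAlgebra ℂ (Fin k → ℂ)))
    -- `W` is contraction-invariant
    (hinv : ∀ φ : Module.Dual ℂ (Fin k → ℂ), ∀ x ∈ W, CliffordAlgebra.contractLeft φ x ∈ W)
    -- `W` is graded
    (hgraded : W = (W ⊓ Λ0) ⊔ (W ⊓ Λ1))
    (hne_bot : W ≠ ⊥)
    (hne_one : W ≠ Submodule.span ℂ {(1 : ExteriorAlgebra ℂ (Fin k → ℂ))}) :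
    ¬ ∃ B : ExteriorAlgebra ℂ (Fin k → ℂ) → ExteriorAlgebra ℂ (Fin k → ℂ) → ℂ,
      -- `B` is ℂ-linear in the first argument (on `W`)
      (∀ (a : ℂ), ∀ u ∈ W, ∀ u' ∈ W, ∀ v ∈ W, B (a • u + u') v = a * B u v + B u' v) ∧
      -- `B` is conjugate-linear in the second argument (on `W`)
      (∀ (a : ℂ), ∀ u ∈ W, ∀ v ∈ W, ∀ v' ∈ W,
        B u (a • v + v') = (starRingEnd ℂ) a * B u v + B u v') ∧
      -- `B` is consistent (on `W`)
      (∀ u ∈ W ⊓ Λ0, ∀ v ∈ W ⊓ Λ1, B u v = 0 ∧ B v u = 0) ∧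
      -- `B` is super positive (on `W`)
      (∀ v ∈ W ⊓ Λ0, v ≠ 0 → ∃ t : ℝ, 0 < t ∧ B v v = (t : ℂ)) ∧
      (∀ v ∈ W ⊓ Λ1, v ≠ 0 → ∃ t : ℝ, 0 < t ∧ B v v = Complex.I * (t : ℂ)) ∧
      -- the restriction of every contraction `ι_φ` to `W` is `B`-super-skew-adjoint
      (∀ φ : Module.Dual ℂ (Fin k → ℂ),
        (∀ v ∈ W ⊓ Λ0, ∀ w ∈ W,
          B (CliffordAlgebra.contractLeft φ v) w + B v (CliffordAlgebra.contractLeft φ w) = 0) ∧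
        (∀ v ∈ W ⊓ Λ1, ∀ w ∈ W,
          B (CliffordAlgebra.contractLeft φ v) w - B v (CliffordAlgebra.contractLeft φ w) = 0)) := by
  subst hΛ0 hΛ1
  rintro ⟨B, -, hconj, -, hpos_even, -, hskew⟩
  have hB_zero : ∀ v ∈ W, B v 0 = 0 := fun v hv => by
    simpa using hconj 1 v hv 0 W.zero_mem 0 W.zero_mem
  have hB_even : ∀ v ∈ W ⊓ evenOdd 0 0, v ≠ 0 → B v v ≠ 0 := fun v hv hv0 => by
    obtain ⟨t, ht, hBv⟩ := hpos_even v hv hv0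
    exact hBv ▸ Complex.ofReal_ne_zero.mpr ht.ne'
  have hodd := inf_evenOdd_one_eq_bot_of_forall_contractLeft_eq_zero fun d _ hv =>
    contractLeft_eq_zero_of_mem_evenOdd_one d (hinv d) hB_zero hB_even (hskew d).2 hv
  have hle := le_span_one_of_inf_evenOdd_one_eq_bot hinv hgraded hodd
  exact hne_one (((nonzero_span_atom _ one_ne_zero).le_iff_eq hne_bot).mp hle)

/-- paper's Proposition 6.2.
Let `k ≥ 1`, `Λ = ⋀ ℂ^k` with its ℤ₂-grading `Λ = Λ₀ ⊕ Λ₁` by even/odd exterior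
degree, and let `W` be a graded contraction-invariant subspace of `Λ` with `W ≠ 0`
and `W ≠ ℂ·1`.  Then there exists no consistent, super positive sesquilinear form
`B` on `W` such that the restriction to `W` of every contraction `ι_φ` is
`B`-super-skew-adjoint. -/
theorem stmt_10 (k : ℕ) (hk : 1 ≤ k)
    (Λ0 Λ1 : Submodule ℂ (ExteriorAlgebra ℂ (Fin k → ℂ)))
    (hΛ0 : Λ0 = CliffordAlgebra.evenOdd (0 : QuadraticForm ℂ (Fin k → ℂ)) 0)
    (hΛ1 : Λ1 = CliffordAlgebra.evenOdd (0 : QuadraticForm ℂ (Fin k → ℂ)) 1)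
    (W : Submodule ℂ (ExteriorAlgebra ℂ (Fin k → ℂ)))
    -- `W` is contraction-invariant
    (hinv : ∀ φ : Module.Dual ℂ (Fin k → ℂ), ∀ x ∈ W, CliffordAlgebra.contractLeft φ x ∈ W)
    -- `W` is graded
    (hgraded : W = (W ⊓ Λ0) ⊔ (W ⊓ Λ1))
    (hne_bot : W ≠ ⊥)
    (hne_one : W ≠ Submodule.span ℂ {(1 : ExteriorAlgebra ℂ (Fin k → ℂ))}) :
    ¬ ∃ B : ExteriorAlgebra ℂ (Fin k → ℂ) → ExteriorAlgebra ℂ (Fin k → ℂ) → ℂ,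
      -- `B` is ℂ-linear in the first argument (on `W`)
      (∀ (a : ℂ), ∀ u ∈ W, ∀ u' ∈ W, ∀ v ∈ W, B (a • u + u') v = a * B u v + B u' v) ∧
      -- `B` is conjugate-linear in the second argument (on `W`)
      (∀ (a : ℂ), ∀ u ∈ W, ∀ v ∈ W, ∀ v' ∈ W,
        B u (a • v + v') = (starRingEnd ℂ) a * B u v + B u v') ∧
      -- `B` is consistent (on `W`)
      (∀ u ∈ W ⊓ Λ0, ∀ v ∈ W ⊓ Λ1, B u v = 0 ∧ B v u = 0) ∧
      -- `B` is super positive (on `W`)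
      (∀ v ∈ W ⊓ Λ0, v ≠ 0 → ∃ t : ℝ, 0 < t ∧ B v v = (t : ℂ)) ∧
      (∀ v ∈ W ⊓ Λ1, v ≠ 0 → ∃ t : ℝ, 0 < t ∧ B v v = Complex.I * (t : ℂ)) ∧
      -- the restriction of every contraction `ι_φ` to `W` is `B`-super-skew-adjoint
      (∀ φ : Module.Dual ℂ (Fin k → ℂ),
        (∀ v ∈ W ⊓ Λ0, ∀ w ∈ W,
          B (CliffordAlgebra.contractLeft φ v) w + B v (CliffordAlgebra.contractLeft φ w) = 0) ∧
        (∀ v ∈ W ⊓ Λ1, ∀ w ∈ W,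
          B (CliffordAlgebra.contractLeft φ v) w - B v (CliffordAlgebra.contractLeft φ w) = 0)) :=
  stmt_10_general k Λ0 Λ1 hΛ0 hΛ1 W hinv hgraded hne_bot hne_one
end
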